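/- arXiv:2512.21621 — 2 statements merged into one kernel-verified Lean document; each statement's English description precedes it below -/
import Mathlib

section
/- Let m ≥ 1 and let Θ be an m×m real matrix such that the kernel of the linear map x ↦ (I−Θ)x on ℝ^m has dimension 1. Let v, κ ∈ ℝ^m be nonzero vectors with (I−Θ)ᵀv = 0 and (I−Θ)κ = 0. Let 𝒯̊ ∈ ℝ^m have strictly positive entries with ⟨v, 𝒯̊⟩ ≠ 0, let 𝒱̊ ∈ ℝ^m, let w ∈ ℝ^m have nonnegative entries summing to 1 with ⟨w, κ⟩ ≠ 0, let L ∈ ℝ, let u, d ∈ ℝ with d < 0 < u, and for p ∈ (0,1) set x(p) := log(−(p·u)/((1−p)·d)). Then there exists exactly one pair (p*, Δ*) ∈ (0,1) × ℝ^m satisfying both (I−Θ)Δ* = x(p*)·𝒯̊ + 𝒱̊ and ⟨w, Δ*⟩ = (u−d)·L, and moreover p* = (−d)/( u·exp( ⟨v,𝒱̊⟩/⟨v,𝒯̊⟩ ) − d ). -/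
/-!
Pairing the consistency equation with the left null vector `v` of `I - Θ` kills its left-hand
side, so `x(p) = -⟨v, 𝒱̊⟩ / ⟨v, 𝒯̊⟩`; since `x` is a strictly monotone log-odds in `p`, this pins
down `p*`. For that `p*` the right-hand side lies in `ker ⟨v, ·⟩`, which equals the range of
`I - Θ` because both have codimension one, so the equation is solvable; the solutions form a line
in the direction `κ`, and `⟨w, κ⟩ ≠ 0` lets market clearing pick exactly one point on it.
-/

open Matrix

namespace Matrix

variable {K n : Type*} [Field K] [Fintype n]

theorem dotProduct_mulVec_eq_zero_of_transpose_mulVec_eq_zero {A : Matrix n n K} {v : n → K}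
    (hv : Aᵀ *ᵥ v = 0) (y : n → K) : v ⬝ᵥ (A *ᵥ y) = 0 := by
  rw [dotProduct_mulVec, ← mulVec_transpose, hv, zero_dotProduct]

theorem dotProduct_smul_add_eq_zero_iff {v T : n → K} (hvT : v ⬝ᵥ T ≠ 0) (V : n → K) (a : K) :
    v ⬝ᵥ (a • T + V) = 0 ↔ a = -(v ⬝ᵥ V / v ⬝ᵥ T) := by
  rw [dotProduct_add, dotProduct_smul, smul_eq_mul, ← neg_div, eq_div_iff hvT,
    eq_neg_iff_add_eq_zero]

theorem eq_smul_of_mulVec_eq_zero {A : Matrix n n K}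
    (hker : Module.finrank K (LinearMap.ker A.mulVecLin) = 1)
    {κ : n → K} (hκ : κ ≠ 0) (hκA : A *ᵥ κ = 0) {y : n → K} (hy : A *ᵥ y = 0) :
    ∃ t : K, y = t • κ := by
  obtain ⟨t, ht⟩ := (finrank_eq_one_iff_of_nonzero' (⟨κ, hκA⟩ : LinearMap.ker A.mulVecLin)
    (Subtype.coe_ne_coe.mp hκ)).mp hker ⟨y, hy⟩
  exact ⟨t, congrArg Subtype.val ht.symm⟩

theorem exists_mulVec_eq_of_dotProduct_eq_zero [DecidableEq n] {A : Matrix n n K}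
    (hker : Module.finrank K (LinearMap.ker A.mulVecLin) = 1)
    {v : n → K} (hv : v ≠ 0) (hvA : Aᵀ *ᵥ v = 0) {b : n → K} (hb : v ⬝ᵥ b = 0) :
    ∃ x, A *ᵥ x = b := by
  set f := dotProductEquiv K n v
  have hf : f ≠ 0 := (dotProductEquiv K n).map_ne_zero_iff.mpr hv
  have hle : LinearMap.range A.mulVecLin ≤ LinearMap.ker f := by
    rintro _ ⟨y, rfl⟩
    exact dotProduct_mulVec_eq_zero_of_transpose_mulVec_eq_zero hvA y
  have hrange : LinearMap.range A.mulVecLin = LinearMap.ker f := by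
    refine Submodule.eq_of_le_of_finrank_eq hle ?_
    have := LinearMap.finrank_range_add_finrank_ker A.mulVecLin
    have := Module.Dual.finrank_ker_add_one_of_ne_zero hf
    omega
  exact (hrange ▸ hb : b ∈ LinearMap.range A.mulVecLin)

theorem existsUnique_mulVec_eq_and_dotProduct_eq [DecidableEq n] {A : Matrix n n K}
    (hker : Module.finrank K (LinearMap.ker A.mulVecLin) = 1)
    {v κ w : n → K} (hv : v ≠ 0) (hκ : κ ≠ 0) (hvA : Aᵀ *ᵥ v = 0) (hκA : A *ᵥ κ = 0)
    (hwκ : w ⬝ᵥ κ ≠ 0) {b : n → K} (hb : v ⬝ᵥ b = 0) (c : K) :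
    ∃! x, A *ᵥ x = b ∧ w ⬝ᵥ x = c := by
  obtain ⟨x₀, hx₀⟩ := exists_mulVec_eq_of_dotProduct_eq_zero hker hv hvA hb
  set t := (c - w ⬝ᵥ x₀) / (w ⬝ᵥ κ)
  refine ⟨x₀ + t • κ, ⟨?_, ?_⟩, ?_⟩
  · rw [mulVec_add, mulVec_smul, hκA, smul_zero, add_zero, hx₀]
  · rw [dotProduct_add, dotProduct_smul, smul_eq_mul, div_mul_cancel₀ _ hwκ]
    ring
  · rintro x ⟨hxb, hxc⟩
    obtain ⟨s, hs⟩ := eq_smul_of_mulVec_eq_zero hker hκ hκA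
      (show A *ᵥ (x - x₀) = 0 by rw [mulVec_sub, hxb, hx₀, sub_self])
    have hs' : s * (w ⬝ᵥ κ) = c - w ⬝ᵥ x₀ := by
      rw [← smul_eq_mul, ← dotProduct_smul, ← hs, dotProduct_sub, hxc]
    rw [← sub_add_cancel x x₀, hs, eq_div_of_mul_eq hwκ hs', add_comm]

end Matrix

section LogOdds

variable {u d : ℝ}

theorem neg_div_mul_exp_sub_mem_Ioo (hd : d < 0) (hu : 0 < u) (c : ℝ) :
    -d / (u * Real.exp c - d) ∈ Set.Ioo 0 1 := by
  have hpos : 0 < u * Real.exp c := mul_pos hu (Real.exp_pos c)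
  constructor
  · exact div_pos (neg_pos.mpr hd) (by linarith)
  · rw [div_lt_one (by linarith)]
    linarith

theorem log_neg_mul_div_eq_neg_iff (hd : d < 0) (hu : 0 < u) {p : ℝ} (hp : p ∈ Set.Ioo 0 1)
    (c : ℝ) :
    Real.log (-(p * u) / ((1 - p) * d)) = -c ↔ p = -d / (u * Real.exp c - d) := by
  obtain ⟨hp0, hp1⟩ := hp
  have hden : (1 - p) * d < 0 := mul_neg_of_pos_of_neg (by linarith) hd
  have harg : 0 < -(p * u) / ((1 - p) * d) :=
    div_pos_of_neg_of_neg (neg_neg_of_pos (mul_pos hp0 hu)) hden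
  have hD : 0 < u * Real.exp c - d := by nlinarith [Real.exp_pos c]
  rw [← Real.exp_eq_exp, Real.exp_log harg, Real.exp_neg, div_eq_iff hden.ne, eq_div_iff hD.ne',
    ← mul_right_inj' (Real.exp_pos c).ne', mul_inv_cancel_left₀ (Real.exp_pos c).ne']
  constructor <;> intro h <;> linarith

end LogOdds

theorem stmt_10_general (m : ℕ) (Θ : Matrix (Fin m) (Fin m) ℝ)
    (hker : Module.finrank ℝ (LinearMap.ker (1 - Θ).mulVecLin) = 1)
    (v κ : Fin m → ℝ) (hv : v ≠ 0) (hκ : κ ≠ 0)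
    (hvA : (1 - Θ)ᵀ *ᵥ v = 0) (hκA : (1 - Θ) *ᵥ κ = 0)
    (Tcirc : Fin m → ℝ) (hvT : v ⬝ᵥ Tcirc ≠ 0)
    (Vcirc : Fin m → ℝ)
    (w : Fin m → ℝ) (hwκ : w ⬝ᵥ κ ≠ 0)
    (L u d : ℝ) (hd : d < 0) (hu : 0 < u) :
    let x : ℝ → ℝ := fun p => Real.log (-(p * u) / ((1 - p) * d))
    let pstar : ℝ := (-d) / (u * Real.exp ((v ⬝ᵥ Vcirc) / (v ⬝ᵥ Tcirc)) - d)
    (∃! q : ℝ × (Fin m → ℝ), q.1 ∈ Set.Ioo (0 : ℝ) 1 ∧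
      (1 - Θ) *ᵥ q.2 = x q.1 • Tcirc + Vcirc ∧ w ⬝ᵥ q.2 = (u - d) * L) ∧
    ∀ q : ℝ × (Fin m → ℝ), q.1 ∈ Set.Ioo (0 : ℝ) 1 →
      (1 - Θ) *ᵥ q.2 = x q.1 • Tcirc + Vcirc → w ⬝ᵥ q.2 = (u - d) * L →
      q.1 = pstar := by
  intro x pstar
  have hpstar : pstar ∈ Set.Ioo 0 1 := neg_div_mul_exp_sub_mem_Ioo hd hu _
  have hx_iff : ∀ p ∈ Set.Ioo (0 : ℝ) 1, x p = -(v ⬝ᵥ Vcirc / v ⬝ᵥ Tcirc) ↔ p = pstar :=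
    fun p hp => log_neg_mul_div_eq_neg_iff hd hu hp _
  have price_eq : ∀ q : ℝ × (Fin m → ℝ), q.1 ∈ Set.Ioo (0 : ℝ) 1 →
      (1 - Θ) *ᵥ q.2 = x q.1 • Tcirc + Vcirc → q.1 = pstar := fun q hq hcons =>
    (hx_iff q.1 hq).mp <| (dotProduct_smul_add_eq_zero_iff hvT Vcirc _).mp <|
      hcons ▸ dotProduct_mulVec_eq_zero_of_transpose_mulVec_eq_zero hvA q.2
  obtain ⟨Δ, hΔ, hΔ_unique⟩ := existsUnique_mulVec_eq_and_dotProduct_eq hker hv hκ hvA hκA hwκ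
    ((dotProduct_smul_add_eq_zero_iff hvT Vcirc (x pstar)).mpr ((hx_iff _ hpstar).mpr rfl))
    ((u - d) * L)
  refine ⟨⟨(pstar, Δ), ⟨hpstar, hΔ⟩, ?_⟩, fun q hq hcons _ => price_eq q hq hcons⟩
  rintro ⟨p, Δ'⟩ ⟨hp, hcons, hclear⟩
  obtain rfl : p = pstar := price_eq (p, Δ') hp hcons
  rw [hΔ_unique Δ' ⟨hcons, hclear⟩]

/-- per-node MC-MFE when `dim Ker(I−Θ) = 1`.  Under the Fredholm
non-degeneracy conditions `⟨v,𝒯̊⟩ ≠ 0` and `⟨w,κ⟩ ≠ 0`, there is exactly one pair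
`(p*, Δ*) ∈ (0,1) × ℝ^m` satisfying the consistency equation `(I−Θ)Δ* = x(p*)𝒯̊ + 𝒱̊`
and the market clearing `⟨w,Δ*⟩ = (u−d)L`, and `p*` has the stated form. -/
theorem stmt_10 (m : ℕ) (hm : 1 ≤ m) (Θ : Matrix (Fin m) (Fin m) ℝ)
    (hker : Module.finrank ℝ (LinearMap.ker (1 - Θ).mulVecLin) = 1)
    (v κ : Fin m → ℝ) (hv : v ≠ 0) (hκ : κ ≠ 0)
    (hvA : (1 - Θ)ᵀ *ᵥ v = 0) (hκA : (1 - Θ) *ᵥ κ = 0)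
    (Tcirc : Fin m → ℝ) (hT : ∀ p, 0 < Tcirc p) (hvT : v ⬝ᵥ Tcirc ≠ 0)
    (Vcirc : Fin m → ℝ)
    (w : Fin m → ℝ) (hw : ∀ p, 0 ≤ w p) (hw1 : ∑ p, w p = 1) (hwκ : w ⬝ᵥ κ ≠ 0)
    (L u d : ℝ) (hd : d < 0) (hu : 0 < u) :
    let x : ℝ → ℝ := fun p => Real.log (-(p * u) / ((1 - p) * d))
    let pstar : ℝ := (-d) / (u * Real.exp ((v ⬝ᵥ Vcirc) / (v ⬝ᵥ Tcirc)) - d)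
    (∃! q : ℝ × (Fin m → ℝ), q.1 ∈ Set.Ioo (0 : ℝ) 1 ∧
      (1 - Θ) *ᵥ q.2 = x q.1 • Tcirc + Vcirc ∧ w ⬝ᵥ q.2 = (u - d) * L) ∧
    ∀ q : ℝ × (Fin m → ℝ), q.1 ∈ Set.Ioo (0 : ℝ) 1 →
      (1 - Θ) *ᵥ q.2 = x q.1 • Tcirc + Vcirc → w ⬝ᵥ q.2 = (u - d) * L →
      q.1 = pstar :=
  stmt_10_general m Θ hker v κ hv hκ hvA hκA Tcirc hvT Vcirc w hwκ L u d hd hu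
end

section
/- Let m ≥ 1 and let Θ be an m×m real matrix such that the kernel of the linear map x ↦ (I−Θ)x on ℝ^m has dimension 1. Let v, κ ∈ ℝ^m be nonzero with (I−Θ)ᵀv = 0, (I−Θ)κ = 0 and ⟨v, κ⟩ ≠ 0. Let 𝒯̊ ∈ ℝ^m have strictly positive entries with ⟨v, 𝒯̊⟩ ≠ 0, let 𝒱̊ ∈ ℝ^m, let w ∈ ℝ^m have nonnegative entries summing to 1 with ⟨w, κ⟩ ≠ 0, let L ∈ ℝ, let u, d ∈ ℝ with d < 0 < u, and for p ∈ (0,1) set x(p) := log(−(p·u)/((1−p)·d)). For ε ∈ ℝ set A(ε) := I − Θ + εI. Then there exists η > 0 such that for every real ε with 0 < |ε| < η: (i) A(ε) is invertible and 𝒯(ε) := wᵀA(ε)^{−1}𝒯̊ ≠ 0; (ii) there is a unique pair (p(ε), Δ(ε)) ∈ (0,1) × ℝ^m with A(ε)Δ(ε) = x(p(ε))·𝒯̊ + 𝒱̊ and ⟨w, Δ(ε)⟩ = (u−d)·L; and (iii) as ε → 0, p(ε) → p* and Δ(ε) → Δ*, where (p*, Δ*) is the unique pair in (0,1) × ℝ^m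 satisfying (I−Θ)Δ* = x(p*)·𝒯̊ + 𝒱̊ and ⟨w, Δ*⟩ = (u−d)·L. -/
/-!
Substituting `y = x(p)`, a shifted logit and hence a homeomorphism `(0, 1) ≃ ℝ`, turns the
clearing conditions into the linear system `A Δ - y 𝒯̊ = 𝒱̊`, `⟨w, Δ⟩ = (u - d) L` in the unknowns
`(Δ, y)`, whose bordered matrix `K(ε)` depends continuously on `ε`. At `ε = 0` this system is
uniquely solvable: in the homogeneous system, pairing with the left null vector `v` gives
`y ⟨v, 𝒯̊⟩ = 0`, so `y = 0`, and then `Δ ∈ Ker(I - Θ) = span κ` is forced to vanish by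
`⟨w, κ⟩ ≠ 0`. Hence `K(ε)` stays invertible near `0` and the solution `K(ε)⁻¹ b` is continuous
there. Finally `A(ε)` is invertible for small `ε ≠ 0` because `I - Θ` has finitely many
eigenvalues, and then `⟨w, A(ε)⁻¹ 𝒯̊⟩ ≠ 0`, since otherwise `(A(ε)⁻¹ 𝒯̊, 1)` would lie in the
kernel of `K(ε)`.
-/

open Matrix Filter Topology

theorem Submodule.eq_span_singleton_of_finrank_eq_one {K V : Type*} [DivisionRing K]
    [AddCommGroup V] [Module K V] {S : Submodule K V} [FiniteDimensional K S]
    (hS : Module.finrank K S = 1) {v : V} (hv : v ∈ S) (hv₀ : v ≠ 0) :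
    S = Submodule.span K {v} :=
  (eq_of_le_of_finrank_le ((span_singleton_le_iff_mem v S).2 hv)
    (by rw [hS, finrank_span_singleton hv₀])).symm

theorem eventually_nhdsNE_zero_iff_abs {P : ℝ → Prop} :
    (∀ᶠ ε in 𝓝[≠] 0, P ε) ↔ ∃ η > 0, ∀ ε, 0 < |ε| → |ε| < η → P ε := by
  simp only [Metric.nhdsWithin_basis_ball.eventually_iff, Set.mem_inter_iff, Metric.mem_ball,
    Real.dist_eq, sub_zero, Set.mem_compl_singleton_iff, abs_pos]
  exact exists_congr fun η => and_congr_right fun _ => forall_congr' fun ε => by tauto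

theorem Sum.exists_eq_elim_unit {α β : Type*} (z : α ⊕ Unit → β) :
    ∃ f b, z = f ⊕ᵥ fun _ => b :=
  ⟨z ∘ Sum.inl, z (Sum.inr ()), by ext (i | i) <;> rfl⟩

namespace Matrix

variable {𝕜 n : Type*}

def bordered [CommRing 𝕜] (M : Matrix n n 𝕜) (T w : n → 𝕜) :
    Matrix (n ⊕ Unit) (n ⊕ Unit) 𝕜 :=
  fromBlocks M (-replicateCol Unit T) (replicateRow Unit w) 0

variable [Fintype n]

theorem bordered_mulVec_eq_iff [CommRing 𝕜] (M : Matrix n n 𝕜) (T w V Δ : n → 𝕜) (y c : 𝕜) :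
    bordered M T w *ᵥ (Δ ⊕ᵥ fun _ => y) = V ⊕ᵥ (fun _ => c) ↔
      M *ᵥ Δ = y • T + V ∧ w ⬝ᵥ Δ = c := by
  simp [bordered, fromBlocks_mulVec, funext_iff, mulVec, dotProduct, mul_comm, ← sub_eq_add_neg,
    sub_eq_iff_eq_add']

section Field

variable [Field 𝕜] [DecidableEq n]

theorem isUnit_bordered {M : Matrix n n 𝕜} {T w v κ : n → 𝕜} (hvM : v ᵥ* M = 0)
    (hvT : v ⬝ᵥ T ≠ 0) (hker : LinearMap.ker M.mulVecLin = Submodule.span 𝕜 {κ})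
    (hwκ : w ⬝ᵥ κ ≠ 0) : IsUnit (bordered M T w) := by
  suffices hinj : Function.Injective (bordered M T w).mulVecLin from
    mulVec_injective_iff_isUnit.1 hinj
  refine LinearMap.ker_eq_bot.1 <| ker_mulVecLin_eq_bot_iff.2 fun z hz => ?_
  obtain ⟨Δ, y, rfl⟩ := Sum.exists_eq_elim_unit z
  rw [show (0 : n ⊕ Unit → 𝕜) = (0 : n → 𝕜) ⊕ᵥ fun _ => 0 by ext (i | i) <;> rfl,
    bordered_mulVec_eq_iff, add_zero] at hz
  obtain ⟨hMΔ, hwΔ⟩ := hz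
  have hy : y = 0 := by
    have h := congrArg (v ⬝ᵥ ·) hMΔ
    simp only [dotProduct_mulVec, hvM, zero_dotProduct, dotProduct_smul, smul_eq_mul] at h
    exact (mul_eq_zero.1 h.symm).resolve_right hvT
  subst hy
  rw [zero_smul] at hMΔ
  have hΔ : Δ ∈ LinearMap.ker M.mulVecLin := hMΔ
  obtain ⟨a, rfl⟩ := Submodule.mem_span_singleton.1 (hker ▸ hΔ)
  rw [dotProduct_smul, smul_eq_mul, mul_eq_zero] at hwΔ
  rw [← Sum.elim_zero_zero]
  simp [hwΔ.resolve_right hwκ, funext_iff]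

theorem eq_inv_mulVec_iff {A : Matrix n n 𝕜} (hA : IsUnit A) {z b : n → 𝕜} :
    A *ᵥ z = b ↔ z = A⁻¹ *ᵥ b := by
  have := hA.invertible
  constructor
  · rintro rfl; rw [mulVec_mulVec, inv_mul_of_invertible, one_mulVec]
  · rintro rfl; rw [mulVec_mulVec, mul_inv_of_invertible, one_mulVec]

theorem dotProduct_inv_mulVec_ne_zero {M : Matrix n n 𝕜} {T w : n → 𝕜} (hM : IsUnit M)
    (hK : IsUnit (bordered M T w)) : w ⬝ᵥ (M⁻¹ *ᵥ T) ≠ 0 := by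
  intro h
  have hsol : bordered M T w *ᵥ (M⁻¹ *ᵥ T ⊕ᵥ fun _ => (1 : 𝕜)) =
      (0 : n → 𝕜) ⊕ᵥ fun _ => 0 := by
    rw [bordered_mulVec_eq_iff, mulVec_mulVec, mul_nonsing_inv _ ((isUnit_iff_isUnit_det M).1 hM)]
    simp [h]
  rw [eq_inv_mulVec_iff hK, ← Pi.zero_def, Sum.elim_zero_zero, mulVec_zero] at hsol
  simpa using congrFun hsol (Sum.inr ())

end Field

section NormedField

variable [NormedField 𝕜] [DecidableEq n]

theorem eventually_isUnit_add_smul_one (M : Matrix n n 𝕜) :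
    ∀ᶠ ε : 𝕜 in 𝓝[≠] 0, IsUnit (M + ε • 1) := by
  have hfin : ((-spectrum 𝕜 M) \ {0}).Finite := (finite_spectrum M).neg.sdiff
  filter_upwards [nhdsWithin_le_nhds (hfin.isClosed.compl_mem_nhds fun h => h.2 rfl),
    self_mem_nhdsWithin] with ε hε hε₀
  have : -ε ∉ spectrum 𝕜 M := fun h => hε ⟨by simpa using h, hε₀⟩
  rw [spectrum.notMem_iff, Algebra.algebraMap_eq_smul_one, ← IsUnit.neg_iff] at this
  simpa [neg_smul, add_comm] using this

omit [Fintype n] in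
theorem continuous_bordered_add_smul_one (M : Matrix n n 𝕜) (T w : n → 𝕜) :
    Continuous fun ε : 𝕜 => bordered (M + ε • 1) T w :=
  (continuous_const.add (continuous_id.smul continuous_const)).matrix_fromBlocks
    continuous_const continuous_const continuous_const

theorem eventually_isUnit_bordered_add_smul_one {M : Matrix n n 𝕜} {T w : n → 𝕜}
    (hK : IsUnit (bordered M T w)) :
    ∀ᶠ ε in 𝓝 (0 : 𝕜), IsUnit (bordered (M + ε • 1) T w) := by
  have hdet := (continuous_bordered_add_smul_one M T w).matrix_det.continuousAt (x := 0)
  rw [isUnit_iff_isUnit_det, isUnit_iff_ne_zero] at hK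
  simpa [isUnit_iff_isUnit_det, isUnit_iff_ne_zero] using hdet.eventually_ne (by simpa using hK)

theorem tendsto_inv_bordered_add_smul_one_mulVec {M : Matrix n n 𝕜} {T w : n → 𝕜}
    (hK : IsUnit (bordered M T w)) (b : n ⊕ Unit → 𝕜) :
    Tendsto (fun ε : 𝕜 => (bordered (M + ε • 1) T w)⁻¹ *ᵥ b) (𝓝 0)
      (𝓝 ((bordered M T w)⁻¹ *ᵥ b)) := by
  rw [isUnit_iff_isUnit_det, isUnit_iff_ne_zero] at hK
  have hinv : ContinuousAt Inv.inv (bordered M T w) :=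
    continuousAt_matrix_inv _ (by simpa [Ring.inverse_eq_inv'] using continuousAt_inv₀ hK)
  have hK₀ := (continuous_bordered_add_smul_one M T w).tendsto 0
  rw [zero_smul, add_zero] at hK₀
  exact ((continuous_id.matrix_mulVec continuous_const).tendsto _).comp (hinv.tendsto.comp hK₀)

end NormedField

end Matrix

namespace Real

theorem sigmoid_log_div_one_sub {p : ℝ} (hp : p ∈ Set.Ioo 0 1) :
    sigmoid (log (p / (1 - p))) = p := by
  obtain ⟨hp₀, hp₁⟩ := hp
  have : 0 < 1 - p := sub_pos.2 hp₁
  rw [sigmoid_def, exp_neg, exp_log (by positivity), inv_div]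
  field_simp
  ring

theorem log_sigmoid_div_one_sub (s : ℝ) : log (sigmoid s / (1 - sigmoid s)) = s := by
  rw [← sigmoid_neg, ← sigmoid_mul_rexp_neg, div_mul_cancel_left₀ (sigmoid_pos s).ne', exp_neg,
    inv_inv, log_exp]

end Real

noncomputable def logOdds (u d p : ℝ) : ℝ := Real.log (-(p * u) / ((1 - p) * d))

noncomputable def logOddsInv (u d y : ℝ) : ℝ := Real.sigmoid (y - Real.log (u / -d))

theorem logOdds_eq {u d p : ℝ} (hu : 0 < u) (hd : d < 0) (hp : p ∈ Set.Ioo 0 1) :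
    logOdds u d p = Real.log (p / (1 - p)) + Real.log (u / -d) := by
  obtain ⟨hp₀, hp₁⟩ := hp
  have : 0 < 1 - p := sub_pos.2 hp₁
  rw [logOdds, ← Real.log_mul (div_pos hp₀ this).ne' (div_pos hu (neg_pos.2 hd)).ne']
  congr 1
  field_simp

theorem mem_Ioo_and_logOdds_eq_iff {u d p y : ℝ} (hu : 0 < u) (hd : d < 0) :
    p ∈ Set.Ioo 0 1 ∧ logOdds u d p = y ↔ p = logOddsInv u d y := by
  constructor
  · rintro ⟨hp, rfl⟩
    rw [logOddsInv, logOdds_eq hu hd hp, add_sub_cancel_right, Real.sigmoid_log_div_one_sub hp]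
  · rintro rfl
    have hp : logOddsInv u d y ∈ Set.Ioo 0 1 := ⟨Real.sigmoid_pos _, Real.sigmoid_lt_one _⟩
    refine ⟨hp, ?_⟩
    rw [logOdds_eq hu hd hp, logOddsInv, Real.log_sigmoid_div_one_sub, sub_add_cancel]

theorem continuous_logOddsInv (u d : ℝ) : Continuous (logOddsInv u d) :=
  continuous_sigmoid.comp (continuous_sub_right _)

section Clearing

variable {n : Type*} [Fintype n] [DecidableEq n]

def IsClearing (u d : ℝ) (M : Matrix n n ℝ) (T w V : n → ℝ) (c : ℝ) (q : ℝ × (n → ℝ)) :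
    Prop :=
  q.1 ∈ Set.Ioo 0 1 ∧ M *ᵥ q.2 = logOdds u d q.1 • T + V ∧ w ⬝ᵥ q.2 = c

noncomputable def clearingSolution (u d : ℝ) (M : Matrix n n ℝ) (T w V : n → ℝ) (c : ℝ) :
    ℝ × (n → ℝ) :=
  let z := (bordered M T w)⁻¹ *ᵥ (V ⊕ᵥ fun _ => c)
  (logOddsInv u d (z (Sum.inr ())), z ∘ Sum.inl)

variable {u d : ℝ} {M : Matrix n n ℝ} {T w V : n → ℝ} {c : ℝ}

theorem isClearing_iff (hu : 0 < u) (hd : d < 0) (hK : IsUnit (bordered M T w))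
    (q : ℝ × (n → ℝ)) : IsClearing u d M T w V c q ↔ q = clearingSolution u d M T w V c := by
  obtain ⟨p, Δ⟩ := q
  rw [IsClearing, ← bordered_mulVec_eq_iff, eq_inv_mulVec_iff hK, clearingSolution]
  obtain ⟨Δ', y, hz⟩ := Sum.exists_eq_elim_unit ((bordered M T w)⁻¹ *ᵥ (V ⊕ᵥ fun _ => c))
  rw [hz, Sum.elim_eq_iff]
  simp only [funext_iff, Prod.mk.injEq, Sum.elim_inr, Function.comp_def, Sum.elim_inl,
    ← mem_Ioo_and_logOdds_eq_iff hu hd]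
  tauto

theorem existsUnique_isClearing (hu : 0 < u) (hd : d < 0) (hK : IsUnit (bordered M T w)) :
    ∃! q, IsClearing u d M T w V c q :=
  ⟨_, (isClearing_iff hu hd hK _).2 rfl, fun q => (isClearing_iff hu hd hK q).1⟩

theorem tendsto_clearingSolution_add_smul_one (hK : IsUnit (bordered M T w)) :
    Tendsto (fun ε : ℝ => clearingSolution u d (M + ε • 1) T w V c) (𝓝 0)
      (𝓝 (clearingSolution u d M T w V c)) := by
  have hz := tendsto_inv_bordered_add_smul_one_mulVec hK (V ⊕ᵥ fun _ => c)
  exact (((continuous_logOddsInv u d).tendsto _).comp (((continuous_apply _).tendsto _).comp hz))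
    |>.prodMk_nhds (((continuous_pi fun i => continuous_apply (Sum.inl i)).tendsto _).comp hz)

end Clearing

theorem stmt_16_general (m : ℕ) (Θ : Matrix (Fin m) (Fin m) ℝ)
    (hker : Module.finrank ℝ (LinearMap.ker (1 - Θ).mulVecLin) = 1)
    (v κ : Fin m → ℝ)
    (hvA : (1 - Θ)ᵀ *ᵥ v = 0) (hκA : (1 - Θ) *ᵥ κ = 0)
    (Tcirc : Fin m → ℝ) (hvT : v ⬝ᵥ Tcirc ≠ 0)
    (Vcirc : Fin m → ℝ)
    (w : Fin m → ℝ) (hwκ : w ⬝ᵥ κ ≠ 0)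
    (L u d : ℝ) (hd : d < 0) (hu : 0 < u) :
    let x : ℝ → ℝ := fun p => Real.log (-(p * u) / ((1 - p) * d))
    let A : ℝ → Matrix (Fin m) (Fin m) ℝ := fun ε => 1 - Θ + ε • 1
    ∃ η : ℝ, 0 < η ∧
      (∀ ε : ℝ, 0 < |ε| → |ε| < η →
        IsUnit (A ε) ∧
        w ⬝ᵥ ((A ε)⁻¹ *ᵥ Tcirc) ≠ 0 ∧
        (∃! q : ℝ × (Fin m → ℝ), q.1 ∈ Set.Ioo (0 : ℝ) 1 ∧
          A ε *ᵥ q.2 = x q.1 • Tcirc + Vcirc ∧ w ⬝ᵥ q.2 = (u - d) * L)) ∧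
      (∃! q : ℝ × (Fin m → ℝ), q.1 ∈ Set.Ioo (0 : ℝ) 1 ∧
        (1 - Θ) *ᵥ q.2 = x q.1 • Tcirc + Vcirc ∧ w ⬝ᵥ q.2 = (u - d) * L) ∧
      ∀ (p : ℝ → ℝ) (Δ : ℝ → Fin m → ℝ),
        (∀ ε : ℝ, 0 < |ε| → |ε| < η →
          p ε ∈ Set.Ioo (0 : ℝ) 1 ∧
          A ε *ᵥ Δ ε = x (p ε) • Tcirc + Vcirc ∧ w ⬝ᵥ Δ ε = (u - d) * L) →
        ∀ (pstar : ℝ) (Δstar : Fin m → ℝ),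
          pstar ∈ Set.Ioo (0 : ℝ) 1 →
          (1 - Θ) *ᵥ Δstar = x pstar • Tcirc + Vcirc → w ⬝ᵥ Δstar = (u - d) * L →
          Tendsto p (𝓝[≠] 0) (𝓝 pstar) ∧ Tendsto Δ (𝓝[≠] 0) (𝓝 Δstar) := by
  intro x A
  have hκ : κ ≠ 0 := by rintro rfl; exact hwκ (dotProduct_zero w)
  have hK₀ : IsUnit (bordered (1 - Θ) Tcirc w) :=
    isUnit_bordered (by rwa [← mulVec_transpose]) hvT
      (Submodule.eq_span_singleton_of_finrank_eq_one hker hκA hκ) hwκ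
  obtain ⟨η, hη, hsmall⟩ := eventually_nhdsNE_zero_iff_abs.1 <|
    (eventually_isUnit_add_smul_one (1 - Θ)).and
      (nhdsWithin_le_nhds (eventually_isUnit_bordered_add_smul_one hK₀))
  refine ⟨η, hη, fun ε hε₀ hεη => ?_, existsUnique_isClearing hu hd hK₀, ?_⟩
  · obtain ⟨hA, hK⟩ := hsmall ε hε₀ hεη
    exact ⟨hA, dotProduct_inv_mulVec_ne_zero hA hK, existsUnique_isClearing hu hd hK⟩
  · intro p Δ hpΔ pstar Δstar hp hΔ hw
    have hsol : ∀ᶠ ε in 𝓝[≠] 0,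
        clearingSolution u d (A ε) Tcirc w Vcirc ((u - d) * L) = (p ε, Δ ε) :=
      eventually_nhdsNE_zero_iff_abs.2 ⟨η, hη, fun ε hε₀ hεη =>
        ((isClearing_iff hu hd (hsmall ε hε₀ hεη).2 (p ε, Δ ε)).1 (hpΔ ε hε₀ hεη)).symm⟩
    have hlim := ((tendsto_clearingSolution_add_smul_one hK₀).mono_left
      nhdsWithin_le_nhds).congr' hsol
    rw [← (isClearing_iff hu hd hK₀ (pstar, Δstar)).1 ⟨hp, hΔ, hw⟩] at hlim
    exact ⟨hlim.fst_nhds, hlim.snd_nhds⟩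

/-- per-node content of Theorem 3.4 (continuity of the MC-MFE at the
singular point).  With `A(ε) = I − Θ + εI`: for small `ε ≠ 0`, `A(ε)` is invertible with
nonzero aggregate tolerance and the perturbed problem has a unique solution `(p(ε), Δ(ε))`;
the singular problem has a unique solution `(p*, Δ*)`; and `(p(ε), Δ(ε)) → (p*, Δ*)` as
`ε → 0`. -/
theorem stmt_16 (m : ℕ) (hm : 1 ≤ m) (Θ : Matrix (Fin m) (Fin m) ℝ)
    (hker : Module.finrank ℝ (LinearMap.ker (1 - Θ).mulVecLin) = 1)
    (v κ : Fin m → ℝ) (hv : v ≠ 0) (hκ : κ ≠ 0)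
    (hvA : (1 - Θ)ᵀ *ᵥ v = 0) (hκA : (1 - Θ) *ᵥ κ = 0) (hvκ : v ⬝ᵥ κ ≠ 0)
    (Tcirc : Fin m → ℝ) (hT : ∀ p, 0 < Tcirc p) (hvT : v ⬝ᵥ Tcirc ≠ 0)
    (Vcirc : Fin m → ℝ)
    (w : Fin m → ℝ) (hw : ∀ p, 0 ≤ w p) (hw1 : ∑ p, w p = 1) (hwκ : w ⬝ᵥ κ ≠ 0)
    (L u d : ℝ) (hd : d < 0) (hu : 0 < u) :
    let x : ℝ → ℝ := fun p => Real.log (-(p * u) / ((1 - p) * d))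
    let A : ℝ → Matrix (Fin m) (Fin m) ℝ := fun ε => 1 - Θ + ε • 1
    ∃ η : ℝ, 0 < η ∧
      (∀ ε : ℝ, 0 < |ε| → |ε| < η →
        IsUnit (A ε) ∧
        w ⬝ᵥ ((A ε)⁻¹ *ᵥ Tcirc) ≠ 0 ∧
        (∃! q : ℝ × (Fin m → ℝ), q.1 ∈ Set.Ioo (0 : ℝ) 1 ∧
          A ε *ᵥ q.2 = x q.1 • Tcirc + Vcirc ∧ w ⬝ᵥ q.2 = (u - d) * L)) ∧
      (∃! q : ℝ × (Fin m → ℝ), q.1 ∈ Set.Ioo (0 : ℝ) 1 ∧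
        (1 - Θ) *ᵥ q.2 = x q.1 • Tcirc + Vcirc ∧ w ⬝ᵥ q.2 = (u - d) * L) ∧
      ∀ (p : ℝ → ℝ) (Δ : ℝ → Fin m → ℝ),
        (∀ ε : ℝ, 0 < |ε| → |ε| < η →
          p ε ∈ Set.Ioo (0 : ℝ) 1 ∧
          A ε *ᵥ Δ ε = x (p ε) • Tcirc + Vcirc ∧ w ⬝ᵥ Δ ε = (u - d) * L) →
        ∀ (pstar : ℝ) (Δstar : Fin m → ℝ),
          pstar ∈ Set.Ioo (0 : ℝ) 1 →
          (1 - Θ) *ᵥ Δstar = x pstar • Tcirc + Vcirc → w ⬝ᵥ Δstar = (u - d) * L →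
          Tendsto p (𝓝[≠] 0) (𝓝 pstar) ∧ Tendsto Δ (𝓝[≠] 0) (𝓝 Δstar) :=
  stmt_16_general m Θ hker v κ hvA hκA Tcirc hvT Vcirc w hwκ L u d hd hu
end
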